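/- arXiv:1705.08916 — 5 statements merged into one kernel-verified Lean document; each statement's English description precedes it below -/
import Mathlib

section
/- Let G be a polynomial with G ≥ 0 on [0,1] and ‖G‖_{L¹[0,1]} > 0. Then there exists a polynomial 𝒰 with 𝒰(x) ∈ [0,1] for all x ∈ [0,1], and deg 𝒰 = deg G + 1, such that ‖𝒰G‖_{L¹} = ‖(1−𝒰)G‖_{L¹} = ½‖G‖_{L¹} and ‖𝒰G − (1−𝒰)G‖_{L¹} = ½‖G‖_{L¹}. -/
/-!
Take for `𝒰` the normalized primitive `U(x) = ∫₀ˣ G / ∫₀¹ G`, the distribution function of the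
probability density `G / ‖G‖` on `[0,1]`: it increases from `0` to `1` and has degree `deg G + 1`.
The substitution `u = U(x)` turns `∫₀¹ |ψ(U x) G x| dx` into `‖G‖ ∫₀¹ |ψ u| du`, and for
`ψ u = u`, `1 - u`, `2u - 1` the last integral is `½` each time.
-/

open MeasureTheory Set intervalIntegral Polynomial

namespace Polynomial

section Antideriv

variable {K : Type*} [Field K]

noncomputable def antideriv (p : K[X]) : K[X] :=
  p.sum fun n a => C (a / (n + 1)) * X ^ (n + 1)

@[simp]
theorem derivative_antideriv [CharZero K] (p : K[X]) : derivative (antideriv p) = p := by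
  rw [antideriv, sum_def, map_sum]
  conv_rhs => rw [p.as_sum_support]
  refine Finset.sum_congr rfl fun n _ => ?_
  rw [derivative_C_mul_X_pow, ← C_mul_X_pow_eq_monomial, Nat.add_sub_cancel]
  push_cast
  rw [div_mul_cancel₀ _ (Nat.cast_add_one_ne_zero n)]

@[simp]
theorem antideriv_eval_zero (p : K[X]) : (antideriv p).eval 0 = 0 := by
  simp [antideriv, sum_def, eval_finsetSum]

end Antideriv

theorem integral_eval_derivative (p : ℝ[X]) (a b : ℝ) :
    ∫ x in a..b, (derivative p).eval x = p.eval b - p.eval a :=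
  integral_eq_sub_of_hasDerivAt (fun x _ => p.hasDerivAt x)
    (p.derivative.continuous.intervalIntegrable _ _)

end Polynomial

theorem intervalIntegral.integral_abs_comp_mul_deriv {a b : ℝ} {f f' g : ℝ → ℝ}
    (hf : ∀ x ∈ uIcc a b, HasDerivAt f (f' x) x) (hf' : ContinuousOn f' (uIcc a b))
    (hf'_nonneg : ∀ x ∈ uIcc a b, 0 ≤ f' x) (hg : Continuous g) :
    ∫ x in a..b, |g (f x) * f' x| = ∫ u in f a..f b, |g u| := by
  rw [← integral_comp_mul_deriv hf hf' hg.abs]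
  refine integral_congr fun x hx => ?_
  rw [abs_mul, abs_of_nonneg (hf'_nonneg x hx), Function.comp_apply]

theorem integral_abs_unitInterval : ∫ u in (0:ℝ)..1, |u| = 1 / 2 := by
  rw [integral_congr (g := fun u => u) fun u hu => abs_of_nonneg ?_]
  · norm_num [integral_id]
  · rw [uIcc_of_le zero_le_one] at hu
    exact hu.1

theorem integral_abs_one_sub_unitInterval : ∫ u in (0:ℝ)..1, |1 - u| = 1 / 2 := by
  rw [integral_comp_sub_left (fun u => |u|), sub_self, sub_zero, integral_abs_unitInterval]

theorem integral_abs_two_mul_sub_one_unitInterval :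
    ∫ u in (0:ℝ)..1, |2 * u - 1| = 1 / 2 := by
  have hint : ∀ a b : ℝ, IntervalIntegrable (fun u : ℝ => |u|) volume a b :=
    fun a b => continuous_abs.intervalIntegrable a b
  have hsymm : ∫ u in (-1:ℝ)..0, |u| = ∫ u in (0:ℝ)..1, |u| := by
    simpa using integral_comp_neg (a := (-1:ℝ)) (b := 0) fun u => |u|
  rw [integral_comp_mul_sub (fun u => |u|) two_ne_zero, show (2:ℝ) * 0 - 1 = -1 by norm_num,
    show (2:ℝ) * 1 - 1 = 1 by norm_num,
    ← integral_add_adjacent_intervals (hint (-1) 0) (hint 0 1), hsymm, integral_abs_unitInterval]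
  norm_num

namespace Polynomial

noncomputable def normalizedAntideriv (G : ℝ[X]) : ℝ[X] :=
  C (∫ x in (0:ℝ)..1, G.eval x)⁻¹ * antideriv G

variable {G : ℝ[X]}

theorem derivative_normalizedAntideriv (G : ℝ[X]) :
    derivative (normalizedAntideriv G) = C (∫ x in (0:ℝ)..1, G.eval x)⁻¹ * G := by
  rw [normalizedAntideriv, derivative_C_mul, derivative_antideriv]

@[simp]
theorem normalizedAntideriv_eval_zero (G : ℝ[X]) : (normalizedAntideriv G).eval 0 = 0 := by
  simp [normalizedAntideriv]

theorem normalizedAntideriv_eval_one (hI : ∫ x in (0:ℝ)..1, G.eval x ≠ 0) :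
    (normalizedAntideriv G).eval 1 = 1 := by
  have hftc := integral_eval_derivative (antideriv G) 0 1
  rw [derivative_antideriv, antideriv_eval_zero, sub_zero] at hftc
  rw [normalizedAntideriv, eval_mul, eval_C, ← hftc, inv_mul_cancel₀ hI]

theorem natDegree_normalizedAntideriv (hI : ∫ x in (0:ℝ)..1, G.eval x ≠ 0) :
    (normalizedAntideriv G).natDegree = G.natDegree + 1 := by
  have hG : G ≠ 0 := by rintro rfl; simp at hI
  have hpos : (normalizedAntideriv G).natDegree ≠ 0 := fun h => by
    have hder := derivative_of_natDegree_zero h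
    rw [derivative_normalizedAntideriv] at hder
    exact mul_ne_zero (C_ne_zero.mpr (inv_ne_zero hI)) hG hder
  have hdeg := natDegree_derivative (normalizedAntideriv G)
  rw [derivative_normalizedAntideriv, natDegree_C_mul (inv_ne_zero hI)] at hdeg
  omega

theorem monotoneOn_normalizedAntideriv (hG : ∀ x ∈ Icc (0:ℝ) 1, 0 ≤ G.eval x) :
    MonotoneOn (fun x => (normalizedAntideriv G).eval x) (Icc 0 1) := by
  have hI : 0 ≤ ∫ x in (0:ℝ)..1, G.eval x := integral_nonneg zero_le_one hG
  refine monotoneOn_of_deriv_nonneg (convex_Icc 0 1) (Polynomial.continuousOn _)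
    (Polynomial.differentiableOn _) fun x hx => ?_
  rw [Polynomial.deriv, derivative_normalizedAntideriv, eval_mul, eval_C]
  exact mul_nonneg (inv_nonneg.mpr hI) (hG x (interior_subset hx))

theorem normalizedAntideriv_mem_Icc (hG : ∀ x ∈ Icc (0:ℝ) 1, 0 ≤ G.eval x)
    (hI : ∫ x in (0:ℝ)..1, G.eval x ≠ 0) {x : ℝ} (hx : x ∈ Icc (0:ℝ) 1) :
    (normalizedAntideriv G).eval x ∈ Icc (0:ℝ) 1 := by
  have hmono := monotoneOn_normalizedAntideriv hG
  constructor
  · simpa using hmono (left_mem_Icc.mpr zero_le_one) hx hx.1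
  · simpa [normalizedAntideriv_eval_one hI] using hmono hx (right_mem_Icc.mpr zero_le_one) hx.2

theorem integral_abs_comp_normalizedAntideriv_mul (hG : ∀ x ∈ Icc (0:ℝ) 1, 0 ≤ G.eval x)
    (hI : 0 < ∫ x in (0:ℝ)..1, G.eval x) (ψ : ℝ → ℝ) (hψ : Continuous ψ) :
    ∫ x in (0:ℝ)..1, |ψ ((normalizedAntideriv G).eval x) * G.eval x|
      = (∫ x in (0:ℝ)..1, G.eval x) * ∫ u in (0:ℝ)..1, |ψ u| := by
  set I := ∫ x in (0:ℝ)..1, G.eval x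
  set U := normalizedAntideriv G
  have hGU : ∀ x, G.eval x = I * (derivative U).eval x := fun x => by
    rw [derivative_normalizedAntideriv, eval_mul, eval_C, mul_inv_cancel_left₀ hI.ne']
  have hU'_nonneg : ∀ x ∈ uIcc (0:ℝ) 1, 0 ≤ (derivative U).eval x := fun x hx => by
    rw [uIcc_of_le zero_le_one] at hx
    exact (mul_nonneg_iff_of_pos_left hI).mp (hGU x ▸ hG x hx)
  have hchange := integral_abs_comp_mul_deriv (f := fun x => U.eval x)
    (fun x _ => U.hasDerivAt x) (derivative U).continuousOn hU'_nonneg hψ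
  rw [normalizedAntideriv_eval_zero, normalizedAntideriv_eval_one hI.ne'] at hchange
  simp_rw [hGU, mul_left_comm _ I, abs_mul, abs_of_pos hI,
    intervalIntegral.integral_const_mul, ← abs_mul, hchange]

end Polynomial

/-- Splitting lemma: if `G` is a polynomial, `G ≥ 0` on `[0,1]`, with
`‖G‖_{L¹[0,1]} > 0`, then there is a polynomial `𝒰` of degree `deg G + 1`
with values in `[0,1]` on `[0,1]` such that `𝒰G` and `(1−𝒰)G` each have
`L¹`-norm `½‖G‖` and `‖𝒰G − (1−𝒰)G‖ = ½‖G‖`. -/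
theorem splitting_lemma (G : Polynomial ℝ)
    (hG0 : ∀ x ∈ Icc (0:ℝ) 1, 0 ≤ G.eval x)
    (hGpos : 0 < ∫ x in (0:ℝ)..1, |G.eval x|) :
    ∃ U : Polynomial ℝ,
      (∀ x ∈ Icc (0:ℝ) 1, U.eval x ∈ Icc (0:ℝ) 1) ∧
      U.natDegree = G.natDegree + 1 ∧
      (∫ x in (0:ℝ)..1, |U.eval x * G.eval x|
        = (1/2) * ∫ x in (0:ℝ)..1, |G.eval x|) ∧
      (∫ x in (0:ℝ)..1, |(1 - U.eval x) * G.eval x|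
        = (1/2) * ∫ x in (0:ℝ)..1, |G.eval x|) ∧
      (∫ x in (0:ℝ)..1, |U.eval x * G.eval x - (1 - U.eval x) * G.eval x|
        = (1/2) * ∫ x in (0:ℝ)..1, |G.eval x|) := by
  have habs : ∫ x in (0:ℝ)..1, |G.eval x| = ∫ x in (0:ℝ)..1, G.eval x :=
    integral_congr fun x hx => abs_of_nonneg (hG0 x (by rwa [uIcc_of_le zero_le_one] at hx))
  rw [habs] at hGpos ⊢
  have key := integral_abs_comp_normalizedAntideriv_mul hG0 hGpos
  refine ⟨normalizedAntideriv G, fun x => normalizedAntideriv_mem_Icc hG0 hGpos.ne',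
    natDegree_normalizedAntideriv hGpos.ne', ?_, ?_, ?_⟩
  · rw [key (fun u => u) continuous_id, integral_abs_unitInterval, mul_comm]
  · rw [key (fun u => 1 - u) (continuous_sub_left 1), integral_abs_one_sub_unitInterval,
      mul_comm]
  · simp_rw [← sub_mul, sub_sub_eq_add_sub, ← two_mul]
    rw [key (fun u => 2 * u - 1) (by fun_prop), integral_abs_two_mul_sub_one_unitInterval,
      mul_comm]
end

section
/- Suppose F : [0,1] → L¹[0,1] satisfies: there is c > 0 and an infinite set of positive integers n such that for every such n and every odd integer i with 1 ≤ i ≤ 2ⁿ − 1, ‖F((i−1)/2ⁿ) + F((i+1)/2ⁿ) − 2F(i/2ⁿ)‖_{L¹} ≥ c·2^{−n}. Then F is nowhere differentiable on [0,1]. -/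
open MeasureTheory Set

noncomputable abbrev mu01 : Measure ℝ := volume.restrict (Icc (0:ℝ) 1)

def HasDerivAtWithin01 {E : Type*} [NormedAddCommGroup E] [NormedSpace ℝ E]
    (F : ℝ → E) (D : E) (t₀ : ℝ) : Prop :=
  ∀ ε > (0:ℝ), ∃ δ > (0:ℝ), ∀ h : ℝ, t₀ + h ∈ Icc (0:ℝ) 1 → |h| < δ →
    ‖F (t₀ + h) - F t₀ - h • D‖ ≤ ε * |h|

/-! If `F` were differentiable at `t₀` with derivative `D`, then on an interval `[a, b] ∋ t₀`
the linear part `x ↦ (x - t₀) • D` cancels in the second difference `F a + F b - 2 F ((a+b)/2)`,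
which is therefore `o(b - a)`. Every `t₀` lies in a dyadic interval `[(i-1)/2ⁿ, (i+1)/2ⁿ]`
with `i` odd, and for `n ∈ S` the second difference there is at least `c · 2⁻ⁿ`, which is
incompatible with `o(2⁻ⁿ)` once `n ∈ S` is large. -/

theorem HasDerivAtWithin01.norm_second_difference_le {E : Type*} [NormedAddCommGroup E]
    [NormedSpace ℝ E] {F : ℝ → E} {D : E} {t₀ : ℝ} (hD : HasDerivAtWithin01 F D t₀)
    {ε : ℝ} (hε : 0 < ε) :
    ∃ δ > 0, ∀ a b : ℝ, Icc a b ⊆ Icc 0 1 → t₀ ∈ Icc a b → b - a < δ →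
      ‖F a + F b - (2:ℝ) • F ((a + b) / 2)‖ ≤ 2 * ε * (b - a) := by
  obtain ⟨δ, hδ, hF⟩ := hD ε hε
  refine ⟨δ, hδ, fun a b hab ht hba => ?_⟩
  set r : ℝ → E := fun x => F x - F t₀ - (x - t₀) • D with hr
  have hr_le : ∀ x ∈ Icc a b, ‖r x‖ ≤ ε * |x - t₀| := fun x hx => by
    have hclose : |x - t₀| < δ := (Real.dist_le_of_mem_Icc hx ht).trans_lt hba
    simpa using hF (x - t₀) (by simpa using hab hx) hclose
  have hmid : (a + b) / 2 ∈ Icc a b := ⟨by linarith [ht.1, ht.2], by linarith [ht.1, ht.2]⟩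
  have hab' : a ≤ b := ht.1.trans ht.2
  have hmid_dist : |(a + b) / 2 - t₀| ≤ (b - a) / 2 :=
    abs_le.mpr ⟨by linarith [ht.2], by linarith [ht.1]⟩
  have hcancel : F a + F b - (2:ℝ) • F ((a + b) / 2) = r a + r b - (2:ℝ) • r ((a + b) / 2) := by
    simp only [hr]
    module
  calc ‖F a + F b - (2:ℝ) • F ((a + b) / 2)‖
      ≤ ‖r a‖ + ‖r b‖ + 2 * ‖r ((a + b) / 2)‖ := by
        rw [hcancel]
        refine (norm_sub_le _ _).trans ?_
        rw [norm_smul, Real.norm_two]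
        gcongr
        exact norm_add_le _ _
    _ ≤ ε * |a - t₀| + ε * |b - t₀| + 2 * (ε * |(a + b) / 2 - t₀|) := by
        gcongr
        exacts [hr_le a ⟨le_rfl, hab'⟩, hr_le b ⟨hab', le_rfl⟩, hr_le _ hmid]
    _ ≤ 2 * ε * (b - a) := by
        rw [abs_of_nonpos (by linarith [ht.1]), abs_of_nonneg (by linarith [ht.2])]
        nlinarith

theorem exists_nat_le_le_succ_of_mem_Icc {x : ℝ} {K : ℕ} (hK : 1 ≤ K) (hx : x ∈ Icc 0 (K : ℝ)) :
    ∃ k : ℕ, k + 1 ≤ K ∧ (k : ℝ) ≤ x ∧ x ≤ k + 1 := by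
  rcases lt_or_ge x K with hlt | hge
  · exact ⟨⌊x⌋₊, (Nat.floor_lt hx.1).mpr hlt, Nat.floor_le hx.1, (Nat.lt_floor_add_one x).le⟩
  · have hcast : ((K - 1 : ℕ) : ℝ) + 1 = K := by exact_mod_cast Nat.sub_add_cancel hK
    exact ⟨K - 1, by omega, by linarith, by linarith [hx.2]⟩

theorem exists_odd_dyadic_Icc_mem {n : ℕ} (hn : 1 ≤ n) {t : ℝ} (ht : t ∈ Icc (0:ℝ) 1) :
    ∃ i : ℕ, Odd i ∧ 1 ≤ i ∧ i ≤ 2 ^ n - 1 ∧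
      Icc (((i:ℝ) - 1) / 2 ^ n) (((i:ℝ) + 1) / 2 ^ n) ⊆ Icc 0 1 ∧
      t ∈ Icc (((i:ℝ) - 1) / 2 ^ n) (((i:ℝ) + 1) / 2 ^ n) := by
  set K : ℕ := 2 ^ (n - 1)
  have hK : 2 ^ n = 2 * K := by rw [← pow_succ']; congr 1; omega
  have hKr : (2:ℝ) ^ n = 2 * K := by exact_mod_cast hK
  have hKpos : (0:ℝ) < K := by positivity
  obtain ⟨k, hkK, hk_le, hle_k⟩ := exists_nat_le_le_succ_of_mem_Icc (x := t * K) Nat.one_le_two_pow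
    ⟨by nlinarith [ht.1], by nlinarith [ht.2]⟩
  have hkK' : (k:ℝ) + 1 ≤ K := by exact_mod_cast hkK
  have hleft : ((2 * k + 1 : ℕ) - 1 : ℝ) / 2 ^ n = k / K := by
    rw [hKr]; push_cast; field_simp; ring
  have hright : ((2 * k + 1 : ℕ) + 1 : ℝ) / 2 ^ n = (k + 1) / K := by
    rw [hKr]; push_cast; field_simp; ring
  refine ⟨2 * k + 1, odd_two_mul_add_one k, by omega, by omega, ?_, ?_⟩
  · rw [hleft, hright]
    exact Icc_subset_Icc (by positivity) ((div_le_one hKpos).mpr hkK')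
  · rw [hleft, hright]
    exact ⟨(div_le_iff₀ hKpos).mpr hk_le, (le_div_iff₀ hKpos).mpr hle_k⟩

theorem c_change_of_direction_implies_nowhere_differentiable_general
    (F : ℝ → Lp ℝ 1 mu01) (c : ℝ) (hc : 0 < c)
    (S : Set ℕ) (hS : S.Infinite)
    (hcd : ∀ n ∈ S, ∀ i : ℕ, Odd i → 1 ≤ i → i ≤ 2 ^ n - 1 →
      c / 2 ^ n ≤ ‖F (((i:ℝ) - 1) / 2 ^ n) + F (((i:ℝ) + 1) / 2 ^ n)
        - (2:ℝ) • F ((i:ℝ) / 2 ^ n)‖) :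
    ∀ t₀ ∈ Icc (0:ℝ) 1, ¬ ∃ D : Lp ℝ 1 mu01, HasDerivAtWithin01 F D t₀ := by
  rintro t₀ ht₀ ⟨D, hD⟩
  obtain ⟨δ, hδ, hsecond⟩ := hD.norm_second_difference_le (ε := c / 8) (by positivity)
  obtain ⟨N, hN⟩ := pow_unbounded_of_one_lt (2 / δ) (one_lt_two (α := ℝ))
  obtain ⟨n, hnS, hNn⟩ := hS.exists_gt N
  obtain ⟨i, hi_odd, hi1, hi_le, hsub, ht⟩ := exists_odd_dyadic_Icc_mem (by omega : 1 ≤ n) ht₀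
  have hpow : (0:ℝ) < 2 ^ n := by positivity
  have hwidth : ((i:ℝ) + 1) / 2 ^ n - ((i:ℝ) - 1) / 2 ^ n = 2 / 2 ^ n := by ring
  have hmid : (((i:ℝ) - 1) / 2 ^ n + ((i:ℝ) + 1) / 2 ^ n) / 2 = (i:ℝ) / 2 ^ n := by ring
  have hsmall : 2 / (2:ℝ) ^ n < δ := by
    rw [div_lt_iff₀ hpow, mul_comm, ← div_lt_iff₀ hδ]
    exact hN.trans_le (pow_le_pow_right₀ one_le_two hNn.le)
  have hupper := hsecond _ _ hsub ht (hwidth ▸ hsmall)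
  rw [hmid, hwidth] at hupper
  have hlower := hcd n hnS i hi_odd hi1 hi_le
  have : c / 2 ^ n ≤ c / 2 ^ n / 2 := hlower.trans (hupper.trans_eq (by ring))
  linarith [div_pos hc hpow]

/-- If `F : [0,1] → L¹[0,1]` "c-changes direction" at all binary points of
infinitely many generations, then `F` is nowhere differentiable. -/
theorem c_change_of_direction_implies_nowhere_differentiable
    (F : ℝ → Lp ℝ 1 mu01) (c : ℝ) (hc : 0 < c)
    (S : Set ℕ) (hS : S.Infinite) (hSpos : ∀ n ∈ S, 0 < n)
    (hcd : ∀ n ∈ S, ∀ i : ℕ, Odd i → 1 ≤ i → i ≤ 2 ^ n - 1 →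
      c / 2 ^ n ≤ ‖F (((i:ℝ) - 1) / 2 ^ n) + F (((i:ℝ) + 1) / 2 ^ n)
        - (2:ℝ) • F ((i:ℝ) / 2 ^ n)‖) :
    ∀ t₀ ∈ Icc (0:ℝ) 1, ¬ ∃ D : Lp ℝ 1 mu01, HasDerivAtWithin01 F D t₀ :=
  c_change_of_direction_implies_nowhere_differentiable_general F c hc S hS hcd
end

section
/- Let F : [0,1] → L¹[0,1] be a map such that for all binary rationals s ≤ t, 0 ≤ F(s)(x) ≤ F(t)(x) ≤ 1 for a.e. x, and such that for every binary point i/2ⁿ of generation n (i odd), ∫₀¹ (F(i/2ⁿ)(x) − F((i−1)/2ⁿ)(x)) dx = ∫₀¹ (F((i+1)/2ⁿ)(x) − F(i/2ⁿ)(x)) dx, with F(0) = 0 and ∫₀¹ F(1) = 1. Then for all binary rationals s ≤ t, ‖F(t) − F(s)‖_{L¹} = t − s. -/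
open MeasureTheory Set

/-- A binary rational in `[0,1]`: a number of the form `i/2ⁿ` with `0 ≤ i ≤ 2ⁿ`. -/
def IsBinary (t : ℝ) : Prop := ∃ (i n : ℕ), i ≤ 2 ^ n ∧ t = (i : ℝ) / 2 ^ n

/-!
The bisection condition says that `t ↦ ∫₀¹ F(t)` takes at each binary point `i/2ⁿ⁺¹` of
generation `n + 1` the average of its values at the neighbours `(i ± 1)/2ⁿ⁺¹`, which are of
earlier generation. By induction on the generation, starting from `∫₀¹ F(0) = 0` and
`∫₀¹ F(1) = 1`, this forces `∫₀¹ F(t) = t` on all binary points. Since `F(s) ≤ F(t)` a.e. for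
`s ≤ t`, the `L¹` distance of `F(t)` and `F(s)` is the difference of their integrals, `t - s`.
-/

lemma IsBinary.natCast_div_two_pow {i n : ℕ} (h : i ≤ 2 ^ n) : IsBinary ((i : ℝ) / 2 ^ n) :=
  ⟨i, n, h, rfl⟩

lemma natCast_two_mul_div_two_pow_succ (j n : ℕ) :
    ((2 * j : ℕ) : ℝ) / 2 ^ (n + 1) = (j : ℝ) / 2 ^ n := by
  push_cast
  ring

theorem eq_self_of_midpoint_on_binaries (g : ℝ → ℝ) (h0 : g 0 = 0) (h1 : g 1 = 1)
    (hmid : ∀ n i : ℕ, Odd i → i ≤ 2 ^ n - 1 →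
      g (i / 2 ^ n) - g ((i - 1) / 2 ^ n) = g ((i + 1) / 2 ^ n) - g (i / 2 ^ n)) :
    ∀ n i : ℕ, i ≤ 2 ^ n → g (i / 2 ^ n) = i / 2 ^ n := by
  intro n
  induction n with
  | zero =>
    intro i hi
    interval_cases i <;> simp [h0, h1]
  | succ n ih =>
    have heven : ∀ j : ℕ, j ≤ 2 ^ n →
        g (((2 * j : ℕ) : ℝ) / 2 ^ (n + 1)) = ((2 * j : ℕ) : ℝ) / 2 ^ (n + 1) := by
      intro j hj
      rw [natCast_two_mul_div_two_pow_succ]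
      exact ih j hj
    intro i hi
    obtain ⟨j, rfl | rfl⟩ := Nat.even_or_odd' i
    · exact heven j (by omega)
    · have hj : j + 1 ≤ 2 ^ n := by rw [pow_succ] at hi; omega
      have hmid' := hmid (n + 1) (2 * j + 1) (odd_two_mul_add_one j) (by omega)
      have hleft := heven j (by omega)
      have hright := heven (j + 1) hj
      push_cast at hmid' hleft hright ⊢
      rw [show 2 * (j : ℝ) + 1 - 1 = 2 * j by ring,
        show 2 * (j : ℝ) + 1 + 1 = 2 * (j + 1) by ring] at hmid'
      linear_combination (hmid' + hleft + hright) / 2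

theorem integral_abs_sub_eq_sub_of_ae_le {α : Type*} [MeasurableSpace α] {μ : Measure α}
    {f g : α → ℝ} (hf : Integrable f μ) (hg : Integrable g μ) (hle : g ≤ᵐ[μ] f) :
    ∫ x, |f x - g x| ∂μ = ∫ x, f x ∂μ - ∫ x, g x ∂μ := by
  rw [← integral_sub hf hg]
  refine integral_congr_ae (hle.mono fun x hx => ?_)
  exact abs_of_nonneg (sub_nonneg.mpr hx)

/-- If `F` is pointwise monotone with values in `[0,1]` (a.e.), `F(0) = 0`,
`∫₀¹ F(1) = 1`, and at each binary point of generation `n` the graph of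
`F(i/2ⁿ)` bisects in area the region between its neighbors, then `F` is an
isometry on binary rationals: `‖F(t) − F(s)‖_{L¹} = t − s` for `s ≤ t`. -/
theorem bisection_gives_isometry_on_binaries
    (F : ℝ → ℝ → ℝ)
    (hInt : ∀ t : ℝ, IsBinary t → IntegrableOn (F t) (Icc (0:ℝ) 1))
    (hMono : ∀ s t : ℝ, IsBinary s → IsBinary t → s ≤ t →
      ∀ᵐ x ∂(volume.restrict (Icc (0:ℝ) 1)),
        0 ≤ F s x ∧ F s x ≤ F t x ∧ F t x ≤ 1)
    (hBisect : ∀ n : ℕ, ∀ i : ℕ, Odd i → 1 ≤ i → i ≤ 2 ^ n - 1 →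
      ∫ x in Icc (0:ℝ) 1, (F ((i:ℝ) / 2 ^ n) x - F (((i:ℝ) - 1) / 2 ^ n) x)
        = ∫ x in Icc (0:ℝ) 1, (F (((i:ℝ) + 1) / 2 ^ n) x - F ((i:ℝ) / 2 ^ n) x))
    (hF0 : ∀ x, F 0 x = 0)
    (hF1 : ∫ x in Icc (0:ℝ) 1, F 1 x = 1) :
    ∀ s t : ℝ, IsBinary s → IsBinary t → s ≤ t →
      ∫ x in Icc (0:ℝ) 1, |F t x - F s x| = t - s := by
  have hmid : ∀ n i : ℕ, Odd i → i ≤ 2 ^ n - 1 →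
      (∫ x in Icc (0:ℝ) 1, F (i / 2 ^ n) x) - ∫ x in Icc (0:ℝ) 1, F ((i - 1) / 2 ^ n) x =
        (∫ x in Icc (0:ℝ) 1, F ((i + 1) / 2 ^ n) x) - ∫ x in Icc (0:ℝ) 1, F (i / 2 ^ n) x := by
    intro n i hi hle
    have hpos := hi.pos
    have hcur := hInt _ (IsBinary.natCast_div_two_pow (i := i) (n := n) (by omega))
    have hprev := hInt _ (IsBinary.natCast_div_two_pow (i := i - 1) (n := n) (by omega))
    have hnext := hInt _ (IsBinary.natCast_div_two_pow (i := i + 1) (n := n) (by omega))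
    rw [Nat.cast_pred hpos] at hprev
    push_cast at hnext
    rw [← integral_sub hcur hprev, ← integral_sub hnext hcur]
    exact hBisect n i hi hpos hle
  have hmean : ∀ t, IsBinary t → ∫ x in Icc (0:ℝ) 1, F t x = t := by
    rintro t ⟨i, n, hi, rfl⟩
    exact eq_self_of_midpoint_on_binaries (fun t => ∫ x in Icc (0:ℝ) 1, F t x)
      (by simp [hF0]) hF1 hmid n i hi
  intro s t hs ht hst
  rw [integral_abs_sub_eq_sub_of_ae_le (hInt t ht) (hInt s hs)
    ((hMono s t hs ht hst).mono fun _ hx => hx.2.1), hmean t ht, hmean s hs]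
end

section
/- Let G and 𝒰 be as in Lemma on splitting: G a polynomial, G ≥ 0 on [0,1], ∫₀¹ G = ‖G‖_{L¹}, and 𝒰(x) = (1/‖G‖_{L¹})∫₀ˣ G. Let A, B be functions with B − A = G, and define C = 𝒰·A + (1−𝒰)·B. Then ‖A + B − 2C‖_{L¹[0,1]} = ½‖G‖_{L¹[0,1]}. -/
open MeasureTheory Set intervalIntegral

/-!
On `[0,1]` the hypotheses give `A + B - 2C = (2𝒰 - 1) G` with `G ≥ 0`, so the left-hand side is
`∫ |2𝒰 - 1| G`. Since `(2𝒰 - 1)' = 2G / ‖G‖`, this is `‖G‖ / 2` times `∫ |u| u'` for `u = 2𝒰 - 1`,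
which runs from `-1` to `1`; and `∫ |u| u' = [u |u| / 2] = 1`.
-/

theorem hasDerivAt_mul_abs (t : ℝ) : HasDerivAt (fun s : ℝ => s * |s|) (2 * |t|) t := by
  rcases eq_or_ne t 0 with rfl | ht
  · simp only [abs_zero, mul_zero]
    rw [hasDerivAt_iff_tendsto_slope]
    have habs : Filter.Tendsto (fun h : ℝ => |h|) (nhdsWithin 0 {(0:ℝ)}ᶜ) (nhds 0) := by
      simpa using (continuous_abs.tendsto (0:ℝ)).mono_left nhdsWithin_le_nhds
    refine habs.congr' ?_
    filter_upwards [self_mem_nhdsWithin] with h hh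
    rw [slope_def_field]
    field_simp [show h ≠ 0 from hh]
    ring
  · refine ((hasDerivAt_id t).mul (hasDerivAt_abs ht)).congr_deriv ?_
    rw [id_eq, mul_comm t, sign_mul_self]
    ring

theorem integral_abs_mul_deriv_eq {u u' : ℝ → ℝ} {a b : ℝ}
    (hu : ∀ x ∈ uIcc a b, HasDerivAt u (u' x) x)
    (hint : IntervalIntegrable (fun x => |u x| * u' x) volume a b) :
    ∫ x in a..b, |u x| * u' x = (u b * |u b| - u a * |u a|) / 2 := by
  have hderiv : ∀ x ∈ uIcc a b, HasDerivAt (fun x => u x * |u x| / 2) (|u x| * u' x) x :=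
    fun x hx => (((hasDerivAt_mul_abs (u x)).comp x (hu x hx)).div_const 2).congr_deriv (by ring)
  rw [integral_eq_sub_of_hasDerivAt hderiv hint]
  ring

theorem integral_abs_two_mul_sub_one_mul_of_normalized_primitive {g U : ℝ → ℝ} {a b : ℝ}
    (hg : Continuous g) (hI : ∫ x in a..b, g x ≠ 0)
    (hU : ∀ x, U x = (∫ t in a..x, g t) / ∫ t in a..b, g t) :
    ∫ x in a..b, |2 * U x - 1| * g x = (∫ x in a..b, g x) / 2 := by
  set I := ∫ x in a..b, g x
  have hu : ∀ x, HasDerivAt (fun x => 2 * U x - 1) (2 * (g x / I)) x := by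
    intro x
    rw [funext hU]
    exact ((((hg.integral_hasStrictDerivAt a x).hasDerivAt).div_const I).const_mul 2).sub_const 1
  have hcont : Continuous fun x => |2 * U x - 1| * (2 * (g x / I)) :=
    (continuous_iff_continuousAt.2 fun x => (hu x).continuousAt).abs.mul
      (continuous_const.mul (hg.div_const I))
  have hUa : U a = 0 := by rw [hU, integral_same, zero_div]
  have hUb : U b = 1 := by rw [hU, div_self hI]
  have hnormalized : ∫ x in a..b, |2 * U x - 1| * (2 * (g x / I)) = 1 := by
    rw [integral_abs_mul_deriv_eq (fun x _ => hu x) (hcont.intervalIntegrable a b), hUa, hUb]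
    norm_num
  calc ∫ x in a..b, |2 * U x - 1| * g x
      = I / 2 * ∫ x in a..b, |2 * U x - 1| * (2 * (g x / I)) := by
        rw [← intervalIntegral.integral_const_mul]
        congr 1 with x
        field_simp
    _ = I / 2 := by rw [hnormalized, mul_one]

/-- With `G` a nonnegative polynomial on `[0,1]` with positive `L¹`-norm,
`𝒰` its normalized antiderivative, `B − A = G` on `[0,1]`, and
`C = 𝒰A + (1−𝒰)B`, one has `‖A + B − 2C‖_{L¹[0,1]} = ½‖G‖_{L¹[0,1]}`. -/
theorem midfunction_second_difference (G : Polynomial ℝ)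
    (hG0 : ∀ x ∈ Icc (0:ℝ) 1, 0 ≤ G.eval x)
    (hGpos : 0 < ∫ x in (0:ℝ)..1, G.eval x)
    (U : ℝ → ℝ)
    (hU : ∀ x, U x = (∫ t in (0:ℝ)..x, G.eval t) / ∫ x in (0:ℝ)..1, G.eval x)
    (A B C : ℝ → ℝ)
    (hAB : ∀ x ∈ Icc (0:ℝ) 1, B x - A x = G.eval x)
    (hC : ∀ x, C x = U x * A x + (1 - U x) * B x) :
    ∫ x in (0:ℝ)..1, |A x + B x - 2 * C x|
      = (1/2) * ∫ x in (0:ℝ)..1, |G.eval x| := by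
  have hLHS : ∫ x in (0:ℝ)..1, |A x + B x - 2 * C x|
      = ∫ x in (0:ℝ)..1, |2 * U x - 1| * G.eval x := by
    refine integral_congr fun x hx => ?_
    rw [uIcc_of_le zero_le_one] at hx
    have hsplit : A x + B x - 2 * C x = (2 * U x - 1) * G.eval x := by
      rw [hC x, ← hAB x hx]
      ring
    rw [hsplit, abs_mul, abs_of_nonneg (hG0 x hx)]
  have hRHS : ∫ x in (0:ℝ)..1, |G.eval x| = ∫ x in (0:ℝ)..1, G.eval x := by
    refine integral_congr fun x hx => ?_
    rw [uIcc_of_le zero_le_one] at hx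
    exact abs_of_nonneg (hG0 x hx)
  rw [hLHS, hRHS, integral_abs_two_mul_sub_one_mul_of_normalized_primitive
    (Polynomial.continuous G) hGpos.ne' hU]
  ring
end

section
/- Let X be a Banach space and F : [0,1] → X a map with the property that for infinitely many n, for every odd i with 1 ≤ i ≤ 2ⁿ−1, ‖F((i−1)/2ⁿ) + F((i+1)/2ⁿ) − 2F(i/2ⁿ)‖ ≥ c·2^{−n} for some fixed c > 0. Then the set of points of differentiability of F in [0,1] is empty; in particular, if X = L¹[0,1], F is a Lipschitz map failing Rademacher-type differentiability everywhere. -/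
open Set

/-!
At a point `t₀` where `F` has derivative `D`, the affine map `t ↦ F t₀ + (t - t₀) • D` has
vanishing second differences, so the second difference of `F` over `m - h, m, m + h` is at most
`o(|m - t₀| + |h|)`. Every `t₀ ∈ [0, 1]` lies within `2⁻ⁿ` of an odd dyadic point `i / 2ⁿ`, and
there the second difference with step `2⁻ⁿ` is at least `c 2⁻ⁿ` for infinitely many `n`; these
two bounds are incompatible.
-/

theorem HasDerivAtWithin01.exists_norm_second_diff_le {E : Type*} [NormedAddCommGroup E]
    [NormedSpace ℝ E] {F : ℝ → E} {D : E} {t₀ : ℝ} (hF : HasDerivAtWithin01 F D t₀)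
    {ε : ℝ} (hε : 0 < ε) :
    ∃ δ > 0, ∀ m h : ℝ, m - h ∈ Icc (0:ℝ) 1 → m + h ∈ Icc (0:ℝ) 1 → |m - t₀| + |h| < δ →
      ‖F (m - h) + F (m + h) - (2:ℝ) • F m‖ ≤ 4 * ε * (|m - t₀| + |h|) := by
  obtain ⟨δ, hδ, hr⟩ := hF ε hε
  refine ⟨δ, hδ, fun m h hm hp hmh => ?_⟩
  set ρ := |m - t₀| + |h|
  set r : ℝ → E := fun s => F (t₀ + s) - F t₀ - s • D
  have hsplit : F (m - h) + F (m + h) - (2:ℝ) • F m =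
      r (m - h - t₀) + r (m + h - t₀) - (2:ℝ) • r (m - t₀) := by
    simp only [r, add_sub_cancel]
    module
  have hr_le : ∀ s, t₀ + s ∈ Icc (0:ℝ) 1 → |s| ≤ ρ → ‖r s‖ ≤ ε * ρ := fun s hs hsρ =>
    (hr s hs (hsρ.trans_lt hmh)).trans (by gcongr)
  have hminus : ‖r (m - h - t₀)‖ ≤ ε * ρ :=
    hr_le _ (by rwa [add_sub_cancel]) (by rw [sub_right_comm]; exact abs_sub _ _)
  have hplus : ‖r (m + h - t₀)‖ ≤ ε * ρ :=
    hr_le _ (by rwa [add_sub_cancel]) (by rw [add_sub_right_comm]; exact abs_add_le _ _)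
  have hmid : ‖r (m - t₀)‖ ≤ ε * ρ :=
    hr_le _ (by rw [add_sub_cancel]; constructor <;> linarith [hm.1, hm.2, hp.1, hp.2])
      (le_add_of_nonneg_right (abs_nonneg h))
  calc ‖F (m - h) + F (m + h) - (2:ℝ) • F m‖
      ≤ ‖r (m - h - t₀)‖ + ‖r (m + h - t₀)‖ + 2 * ‖r (m - t₀)‖ := by
        rw [hsplit]
        refine (norm_sub_le _ _).trans ?_
        rw [norm_smul, Real.norm_two]
        gcongr
        exact norm_add_le _ _
    _ ≤ 4 * ε * ρ := by linarith

theorem exists_odd_abs_sub_le_one {x : ℝ} {m : ℕ} (hm : 0 < m) (hx₀ : 0 ≤ x)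
    (hx : x ≤ 2 * m) : ∃ i : ℕ, Odd i ∧ i < 2 * m ∧ |(i : ℝ) - x| ≤ 1 := by
  by_cases hk : ⌊x / 2⌋₊ < m
  · refine ⟨2 * ⌊x / 2⌋₊ + 1, odd_two_mul_add_one _, by omega, ?_⟩
    have hle := Nat.floor_le (div_nonneg hx₀ zero_le_two)
    have hlt := Nat.lt_floor_add_one (x / 2)
    push_cast
    rw [abs_le]
    constructor <;> linarith
  · refine ⟨2 * (m - 1) + 1, odd_two_mul_add_one _, by omega, ?_⟩
    have hmx : (m : ℝ) ≤ x / 2 :=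
      (Nat.le_floor_iff (div_nonneg hx₀ zero_le_two)).mp (not_lt.mp hk)
    rw [Nat.cast_add, Nat.cast_mul, Nat.cast_sub hm, abs_le]
    push_cast
    constructor <;> linarith

theorem exists_odd_abs_div_two_pow_sub_le {t : ℝ} (ht : t ∈ Icc (0:ℝ) 1) {n : ℕ} (hn : 0 < n) :
    ∃ i : ℕ, Odd i ∧ i < 2 ^ n ∧ |(i : ℝ) / 2 ^ n - t| ≤ 1 / 2 ^ n := by
  have hpow : (0:ℝ) < 2 ^ n := by positivity
  have h2m : 2 * 2 ^ (n - 1) = 2 ^ n := by rw [mul_comm, Nat.two_pow_pred_mul_two hn]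
  have hx₀ : 0 ≤ t * 2 ^ n := mul_nonneg ht.1 hpow.le
  have hx : t * 2 ^ n ≤ 2 * ((2 ^ (n - 1) : ℕ) : ℝ) := by
    rw [← Nat.cast_ofNat, ← Nat.cast_mul, h2m, Nat.cast_pow, Nat.cast_ofNat]
    exact mul_le_of_le_one_left hpow.le ht.2
  obtain ⟨i, hodd, hi, hix⟩ := exists_odd_abs_sub_le_one (Nat.two_pow_pos (n - 1)) hx₀ hx
  refine ⟨i, hodd, h2m ▸ hi, ?_⟩
  rwa [← mul_div_cancel_right₀ t hpow.ne', ← sub_div, abs_div, abs_of_pos hpow,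
    div_le_div_iff_of_pos_right hpow]

theorem Set.Infinite.exists_pos_one_div_two_pow_lt {S : Set ℕ} (hS : S.Infinite) {δ : ℝ}
    (hδ : 0 < δ) : ∃ n ∈ S, 0 < n ∧ 1 / (2:ℝ) ^ n < δ := by
  obtain ⟨N, hN⟩ := exists_pow_lt_of_lt_one hδ (by norm_num : (1 / 2 : ℝ) < 1)
  obtain ⟨n, hnS, hNn⟩ := hS.exists_gt N
  refine ⟨n, hnS, by omega, ?_⟩
  rw [← one_div_pow]
  exact (pow_le_pow_of_le_one (by norm_num) (by norm_num) hNn.le).trans_lt hN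

theorem set_of_differentiability_points_empty_general
    {X : Type*} [NormedAddCommGroup X] [NormedSpace ℝ X]
    (F : ℝ → X) (c : ℝ) (hc : 0 < c)
    (S : Set ℕ) (hS : S.Infinite)
    (hcd : ∀ n ∈ S, ∀ i : ℕ, Odd i → 1 ≤ i → i ≤ 2 ^ n - 1 →
      c / 2 ^ n ≤ ‖F (((i:ℝ) - 1) / 2 ^ n) + F (((i:ℝ) + 1) / 2 ^ n)
        - (2:ℝ) • F ((i:ℝ) / 2 ^ n)‖) :
    {t₀ ∈ Icc (0:ℝ) 1 | ∃ D : X, HasDerivAtWithin01 F D t₀} = ∅ := by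
  refine eq_empty_of_forall_notMem fun t₀ ⟨ht₀, D, hD⟩ => ?_
  obtain ⟨δ, hδ, hsecond⟩ := hD.exists_norm_second_diff_le (ε := c / 16) (by positivity)
  obtain ⟨n, hnS, hn, hnδ⟩ := hS.exists_pos_one_div_two_pow_lt (half_pos hδ)
  obtain ⟨i, hodd, hi, hit⟩ := exists_odd_abs_div_two_pow_sub_le ht₀ hn
  have hpow : (0:ℝ) < 2 ^ n := by positivity
  have hi₁ : (1:ℝ) ≤ i := by exact_mod_cast hodd.pos
  have hi₂ : (i:ℝ) + 1 ≤ 2 ^ n := by exact_mod_cast hi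
  have hmem : ∀ j : ℝ, 0 ≤ j → j ≤ 2 ^ n → j / 2 ^ n ∈ Icc (0:ℝ) 1 := fun j hj₀ hj₁ =>
    ⟨div_nonneg hj₀ hpow.le, (div_le_one hpow).mpr hj₁⟩
  have hstep : |1 / (2:ℝ) ^ n| = 1 / 2 ^ n := abs_of_pos (by positivity)
  have hupper := hsecond (i / 2 ^ n) (1 / 2 ^ n)
    (by rw [← sub_div]; exact hmem _ (by linarith) (by linarith))
    (by rw [← add_div]; exact hmem _ (by linarith) hi₂)
    (by rw [hstep]; linarith)
  rw [← sub_div, ← add_div, hstep] at hupper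
  have hlower := hcd n hnS i hodd hodd.pos (by omega)
  have hhalf : c / 2 ^ n ≤ c / 2 ^ n / 2 := by
    calc c / 2 ^ n ≤ 4 * (c / 16) * (|(i:ℝ) / 2 ^ n - t₀| + 1 / 2 ^ n) := hlower.trans hupper
      _ ≤ 4 * (c / 16) * (1 / 2 ^ n + 1 / 2 ^ n) := by gcongr
      _ = c / 2 ^ n / 2 := by ring
  linarith [div_pos hc hpow]

/-- If `F : [0,1] → X` (`X` a Banach space) `c`-changes direction at all binary
points of infinitely many generations, then its set of points of
differentiability in `[0,1]` is empty. -/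
theorem set_of_differentiability_points_empty
    {X : Type*} [NormedAddCommGroup X] [NormedSpace ℝ X] [CompleteSpace X]
    (F : ℝ → X) (c : ℝ) (hc : 0 < c)
    (S : Set ℕ) (hS : S.Infinite) (hSpos : ∀ n ∈ S, 0 < n)
    (hcd : ∀ n ∈ S, ∀ i : ℕ, Odd i → 1 ≤ i → i ≤ 2 ^ n - 1 →
      c / 2 ^ n ≤ ‖F (((i:ℝ) - 1) / 2 ^ n) + F (((i:ℝ) + 1) / 2 ^ n)
        - (2:ℝ) • F ((i:ℝ) / 2 ^ n)‖) :
    {t₀ ∈ Icc (0:ℝ) 1 | ∃ D : X, HasDerivAtWithin01 F D t₀} = ∅ :=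
  set_of_differentiability_points_empty_general F c hc S hS hcd
end
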